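/- Let 1 → G → Γ → ℤ^c → 1 be a group extension with G finite. Then there exists a positive integer m and a normal subgroup N of Γ such that: N is free abelian of rank c, N ∩ G = {1}, the image of N in ℤ^c equals (mℤ)^c, and the quotient H := Γ/N is a finite group into which G injects, fitting into an extension 1 → G → H → (ℤ/m)^c → 1. -/

import Mathlib

/-!
The centralizer of the finite normal subgroup `G` has finite index `k`. For `y` in it and any `g`,
`g y g⁻¹ = y h` with `h ∈ G` (as `Γ ⧸ G` is abelian) commuting with `y`, so
`g y ^ |G| g⁻¹ = (y h) ^ |G| = y ^ |G|`. Hence for `m = k |G|` all `m`-th powers in `Γ` are central. The `m`-th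
powers of lifts of the standard basis of `ℤ^c` generate a central, hence normal, copy `N` of `ℤ^c`
mapping onto `(mℤ)^c`; it meets `G` trivially because `ℤ^c` is torsion-free, and `Γ ⧸ N` is then an
extension of `(ℤ/m)^c` by `G`.
-/

open Function Multiplicative Subgroup

namespace Subgroup

variable {Γ : Type*} [Group Γ]

theorem normal_of_le_center {N : Subgroup Γ} (h : N ≤ center Γ) : N.Normal :=
  ⟨fun n hn g => by rw [mem_center_iff.mp (h hn) g, mul_inv_cancel_right]; exact hn⟩

theorem centralizer_eq_ker_conjNormal (G : Subgroup Γ) [G.Normal] :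
    centralizer (G : Set Γ) = (MulAut.conjNormal (H := G)).ker := by
  ext y
  simp only [mem_centralizer_iff, MonoidHom.mem_ker, MulEquiv.ext_iff, Subtype.ext_iff,
    MulAut.conjNormal_apply, MulAut.one_apply, mul_inv_eq_iff_eq_mul, SetLike.mem_coe,
    Subtype.forall]
  exact forall₂_congr fun _ _ => eq_comm

instance finiteIndex_centralizer (G : Subgroup Γ) [G.Normal] [Finite G] :
    (centralizer (G : Set Γ)).FiniteIndex := by
  rw [centralizer_eq_ker_conjNormal]
  infer_instance

end Subgroup

section CentralPowers

variable {Γ A : Type*} [Group Γ] [CommGroup A]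

theorem pow_card_ker_mem_center_of_mem_centralizer (π : Γ →* A) [Finite π.ker] {y : Γ}
    (hy : y ∈ centralizer (π.ker : Set Γ)) : y ^ Nat.card π.ker ∈ center Γ := by
  refine mem_center_iff.mpr fun g => ?_
  set q := Nat.card π.ker
  set h := y⁻¹ * (g * y * g⁻¹)
  have hh : h ∈ π.ker := by simp [h, mul_comm (π g)]
  have hyh : Commute y h := (mem_centralizer_iff.mp hy h hh).symm
  have hq : h ^ q = 1 :=
    congrArg Subtype.val (pow_card_eq_one' (x := (⟨h, hh⟩ : π.ker)))
  have : g * y ^ q * g⁻¹ = y ^ q := by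
    rw [← conj_pow, show g * y * g⁻¹ = y * h by simp [h], hyh.mul_pow, hq, mul_one]
  exact mul_inv_eq_iff_eq_mul.mp this

theorem exists_pow_mem_center_of_finite_ker (π : Γ →* A) [Finite π.ker] :
    ∃ m, 0 < m ∧ ∀ x : Γ, x ^ m ∈ center Γ := by
  refine ⟨(centralizer (π.ker : Set Γ)).index * Nat.card π.ker,
    Nat.mul_pos (Nat.pos_of_ne_zero FiniteIndex.index_ne_zero) Nat.card_pos, fun x => ?_⟩
  rw [pow_mul]
  exact pow_card_ker_mem_center_of_mem_centralizer π (pow_index_mem _ x)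

end CentralPowers

section Lattice

variable {ι : Type*}

theorem exists_monoidHom_multiplicative_pi_int [Fintype ι] [DecidableEq ι] {M : Type*}
    [CommGroup M] (w : ι → M) :
    ∃ f : Multiplicative (ι → ℤ) →* M, ∀ i, f (ofAdd (Pi.single i 1)) = w i :=
  ⟨AddMonoidHom.toMultiplicativeLeft
      (Fintype.linearCombination ℤ fun i => Additive.ofMul (w i)).toAddMonoidHom,
    fun i => by simp [Fintype.linearCombination_apply_single]⟩

open scoped IsMulCommutative in
theorem exists_central_section_pow [Fintype ι] {Γ : Type*} [Group Γ]
    (π : Γ →* Multiplicative (ι → ℤ)) (hπ : Surjective π) {m : ℕ}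
    (hm : ∀ x : Γ, x ^ m ∈ center Γ) :
    ∃ s : Multiplicative (ι → ℤ) →* Γ, s.range ≤ center Γ ∧ π.comp s = powMonoidHom m := by
  classical
  choose x hx using fun i => hπ (ofAdd (Pi.single i 1))
  obtain ⟨f, hf⟩ := exists_monoidHom_multiplicative_pi_int fun i => (⟨x i ^ m, hm _⟩ : center Γ)
  refine ⟨(center Γ).subtype.comp f, ?_, ?_⟩
  · rintro _ ⟨a, rfl⟩
    exact (f a).2
  · ext i
    simp [hf, hx]

theorem range_powMonoidHom_multiplicative_pi_int (m : ℕ) :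
    (powMonoidHom m : Multiplicative (ι → ℤ) →* _).range =
      AddSubgroup.toSubgroup (AddSubgroup.pi Set.univ fun _ => AddSubgroup.zmultiples (m : ℤ)) := by
  ext a
  simp only [MonoidHom.mem_range, powMonoidHom_apply, Multiplicative.mem_toSubgroup,
    AddSubgroup.mem_pi, Set.mem_univ, forall_const, Int.mem_zmultiples_iff]
  constructor
  · rintro ⟨b, rfl⟩ j
    exact ⟨toAdd b j, by simp⟩
  · intro h
    choose b hb using h
    exact ⟨ofAdd b, by ext j; simp [← hb]⟩

abbrev reduceMod (ι : Type*) (m : ℕ) : Multiplicative (ι → ℤ) →* Multiplicative (ι → ZMod m) :=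
  (AddMonoidHom.compLeft (Int.castAddHom (ZMod m)) ι).toMultiplicative

theorem reduceMod_surjective (m : ℕ) : Surjective (reduceMod ι m) := by
  intro a
  choose b hb using fun j => ZMod.intCast_surjective (toAdd a j)
  exact ⟨ofAdd b, by ext j; simp [hb]⟩

theorem ker_reduceMod (m : ℕ) :
    (reduceMod ι m).ker =
      AddSubgroup.toSubgroup (AddSubgroup.pi Set.univ fun _ => AddSubgroup.zmultiples (m : ℤ)) := by
  ext a
  simp [← ZMod.ker_intCastAddHom, funext_iff, AddSubgroup.mem_pi]

end Lattice

namespace MonoidHom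

variable {Γ A B : Type*} [Group Γ] [Group A] [Group B]

theorem range_inf_ker_eq_bot_of_injective_comp {s : A →* Γ} {π : Γ →* B}
    (h : Injective (π.comp s)) : s.range ⊓ π.ker = ⊥ := by
  refine eq_bot_iff.mpr ?_
  rintro _ ⟨⟨a, rfl⟩, ha⟩
  rw [h (show (π.comp s) a = (π.comp s) 1 by simpa using ha), map_one]
  exact one_mem _

theorem injective_restrict_of_ker_inf_eq_bot {φ : Γ →* A} {G : Subgroup Γ}
    (h : φ.ker ⊓ G = ⊥) : Injective fun g : G => φ g := by
  intro g₁ g₂ hg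
  have : (g₁ : Γ) * (g₂ : Γ)⁻¹ ∈ φ.ker ⊓ G :=
    ⟨by simp [show φ g₁ = φ g₂ from hg], G.mul_mem g₁.2 (G.inv_mem g₂.2)⟩
  rw [h, mem_bot, mul_inv_eq_one] at this
  exact Subtype.ext this

end MonoidHom

section FiniteQuotient

variable {Γ A B : Type*} [Group Γ] [Group A] [Group B] {π : Γ →* A} {ρ : A →* B}
  {N : Subgroup Γ}

theorem le_ker_comp_of_map_eq_ker (hN : N.map π = ρ.ker) : N ≤ (ρ.comp π).ker := by
  rw [← MonoidHom.comap_ker, ← hN]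
  exact le_comap_map π N

theorem ker_lift_comp_of_map_eq_ker [N.Normal] (hN : N.map π = ρ.ker) :
    (QuotientGroup.lift N (ρ.comp π) (le_ker_comp_of_map_eq_ker hN)).ker =
      π.ker.map (QuotientGroup.mk' N) := by
  rw [QuotientGroup.ker_lift, ← MonoidHom.comap_ker, ← hN, comap_map_eq, Subgroup.map_sup,
    QuotientGroup.map_mk'_self, bot_sup_eq]

universe w in
theorem exists_finite_extension_of_map_eq_ker [N.Normal] [Finite B] (hπ : Surjective π)
    (hρ : Surjective ρ) (G : Subgroup Γ) [Finite G] (hG : π.ker = G) (hNG : N ⊓ G = ⊥)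
    (hN : N.map π = ρ.ker) :
    ∃ (H : Type w) (_ : Group H) (_ : Finite H) (φ : Γ →* H),
      Surjective φ ∧ φ.ker = N ∧ Injective (fun g : G => φ g) ∧
      ∃ ψ : H →* B, Surjective ψ ∧ ψ.ker = G.map φ := by
  subst hG
  set ψ := QuotientGroup.lift N (ρ.comp π) (le_ker_comp_of_map_eq_ker hN)
  have hψ : ψ.ker = π.ker.map (QuotientGroup.mk' N) := ker_lift_comp_of_map_eq_ker hN
  have : Finite (π.ker.map (QuotientGroup.mk' N)) :=
    Finite.of_surjective _ ((QuotientGroup.mk' N).subgroupMap_surjective π.ker)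
  have : Finite (Γ ⧸ N) := ψ.finite_iff_finite_ker_range.mpr ⟨hψ ▸ inferInstance, inferInstance⟩
  have hψsurj : Surjective ψ :=
    QuotientGroup.lift_surjective_of_surjective _ _ (hρ.comp hπ : Surjective (ρ.comp π)) _
  let e : Γ ⧸ N ≃* Shrink.{w} (Γ ⧸ N) := Shrink.mulEquiv.symm
  refine ⟨Shrink.{w} (Γ ⧸ N), inferInstance, inferInstance,
    (e : Γ ⧸ N →* Shrink.{w} (Γ ⧸ N)).comp (QuotientGroup.mk' N),
    e.surjective.comp (QuotientGroup.mk'_surjective N), ?_, ?_,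
    ψ.comp (e.symm : Shrink.{w} (Γ ⧸ N) →* Γ ⧸ N), hψsurj.comp e.symm.surjective, ?_⟩
  · rw [MonoidHom.ker_mulEquiv_comp, QuotientGroup.ker_mk']
  · refine MonoidHom.injective_restrict_of_ker_inf_eq_bot ?_
    rwa [MonoidHom.ker_mulEquiv_comp, QuotientGroup.ker_mk']
  · rw [MonoidHom.ker_comp_mulEquiv, hψ, ← map_map, MulEquiv.symm_symm]

end FiniteQuotient

/-- Characteristic splitting: given an extension `1 → G → Γ → ℤ^c → 1` with `G` finite,
there exist `m > 0` and a normal subgroup `N ⊴ Γ` which is free abelian of rank `c`,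
meets `G` trivially, maps onto `(mℤ)^c`, and such that `H := Γ/N` is finite, `G` injects
into `H`, and `H` fits in an extension `1 → G → H → (ℤ/m)^c → 1`. -/
theorem stmt5 {Γ : Type*} [Group Γ] (G : Subgroup Γ) [G.Normal] [Finite G] (c : ℕ)
    (e : (Γ ⧸ G) ≃* Multiplicative (Fin c → ℤ)) :
    ∃ (m : ℕ), 0 < m ∧ ∃ N : Subgroup Γ, N.Normal ∧
      Nonempty (N ≃* Multiplicative (Fin c → ℤ)) ∧
      N ⊓ G = ⊥ ∧
      Subgroup.map (e.toMonoidHom.comp (QuotientGroup.mk' G)) N =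
        AddSubgroup.toSubgroup (AddSubgroup.pi Set.univ fun _ : Fin c =>
          AddSubgroup.zmultiples (m : ℤ)) ∧
      ∃ (H : Type _) (_ : Group H) (_ : Finite H) (φ : Γ →* H),
        Function.Surjective φ ∧ φ.ker = N ∧
        Function.Injective (fun g : G => φ (g : Γ)) ∧
        ∃ ψ : H →* Multiplicative (Fin c → ZMod m),
          Function.Surjective ψ ∧ ψ.ker = Subgroup.map φ G := by
  set π := e.toMonoidHom.comp (QuotientGroup.mk' G)
  have hπ : Surjective π := e.surjective.comp (QuotientGroup.mk'_surjective G)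
  have hker : π.ker = G := by
    rw [show π = (e : Γ ⧸ G →* _).comp (QuotientGroup.mk' G) from rfl,
      MonoidHom.ker_mulEquiv_comp, QuotientGroup.ker_mk']
  have : Finite π.ker := hker ▸ inferInstance
  obtain ⟨m, hm, hcenter⟩ := exists_pow_mem_center_of_finite_ker π
  obtain ⟨s, hs_center, hπs⟩ := exists_central_section_pow π hπ hcenter
  have hinj : Injective (π.comp s) := hπs ▸ pow_left_injective hm.ne'
  have hNG : s.range ⊓ G = ⊥ := hker ▸ MonoidHom.range_inf_ker_eq_bot_of_injective_comp hinj
  have hmap : s.range.map π = AddSubgroup.toSubgroup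
      (AddSubgroup.pi Set.univ fun _ : Fin c => AddSubgroup.zmultiples (m : ℤ)) := by
    rw [MonoidHom.map_range, hπs, range_powMonoidHom_multiplicative_pi_int]
  have hN := normal_of_le_center hs_center
  have : NeZero m := ⟨hm.ne'⟩
  have hs : Injective s := Injective.of_comp (f := π) hinj
  exact ⟨m, hm, s.range, hN, ⟨(MonoidHom.ofInjective hs).symm⟩, hNG, hmap,
    exists_finite_extension_of_map_eq_ker hπ (reduceMod_surjective m) G hker hNG
      (hmap.trans (ker_reduceMod m).symm)⟩
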